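/- Let (d_p)_{p≥1} and (l_p)_{p≥1} be sequences of real numbers, zero for p > N, and let χ ≤ 0. Suppose that for every r ≥ 1 one has Σ_{p=1}^r ( p·d_p + l_p · p(p−1)/2 · χ ) ≤ 0. Then Σ_{p≥1} d_p ≤ −χ · Σ_{p≥1} l_p (p−1)/2. -/

import Mathlib

/-!
Abel summation against the decreasing weights `1/p` turns the nonpositive partial sums of
`a_p = p d_p + l_p p(p-1)/2 χ` into `∑ a_p / p ≤ 0`, and `a_p / p = d_p + χ l_p (p-1)/2`.
-/

open Finset

section PartialSummation

variable {R : Type*} [CommRing R] [LinearOrder R] [IsStrictOrderedRing R]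

theorem sum_Icc_mul_le_mul_sum_of_partial_sums_nonpos {a w : ℕ → R}
    (hw : AntitoneOn w (Set.Ici 1)) (ha : ∀ r, 1 ≤ r → ∑ p ∈ Icc 1 r, a p ≤ 0) (N : ℕ) :
    ∑ p ∈ Icc 1 N, w p * a p ≤ w N * ∑ p ∈ Icc 1 N, a p := by
  induction N with
  | zero => simp
  | succ n ih =>
    rw [sum_Icc_succ_top (by omega), sum_Icc_succ_top (by omega), mul_add]
    rcases Nat.eq_zero_or_pos n with rfl | hn
    · simp
    have hwn : w (n + 1) ≤ w n := hw (Set.mem_Ici.2 hn) (Set.mem_Ici.2 (by omega)) (by omega)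
    have hreweight : w n * ∑ p ∈ Icc 1 n, a p ≤ w (n + 1) * ∑ p ∈ Icc 1 n, a p :=
      mul_le_mul_of_nonpos_right hwn (ha n hn)
    linarith

theorem sum_Icc_mul_nonpos_of_partial_sums_nonpos {a w : ℕ → R}
    (hw : AntitoneOn w (Set.Ici 1)) (hw₀ : ∀ p, 0 ≤ w p)
    (ha : ∀ r, 1 ≤ r → ∑ p ∈ Icc 1 r, a p ≤ 0) (N : ℕ) :
    ∑ p ∈ Icc 1 N, w p * a p ≤ 0 := by
  rcases Nat.eq_zero_or_pos N with rfl | hN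
  · simp
  calc ∑ p ∈ Icc 1 N, w p * a p ≤ w N * ∑ p ∈ Icc 1 N, a p :=
        sum_Icc_mul_le_mul_sum_of_partial_sums_nonpos hw ha N
    _ ≤ 0 := mul_nonpos_of_nonneg_of_nonpos (hw₀ N) (ha N hN)

end PartialSummation

theorem antitoneOn_natCast_inv : AntitoneOn (fun p : ℕ => ((p : ℝ))⁻¹) (Set.Ici 1) := by
  intro m hm n _ hmn
  have hm' : (0 : ℝ) < m := by exact_mod_cast hm
  exact inv_anti₀ hm' (by exact_mod_cast hmn)

theorem stmt_3_general (d l : ℕ → ℝ) (N : ℕ) (χ : ℝ)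
    (h : ∀ r : ℕ, 1 ≤ r →
      (∑ p ∈ Finset.Icc 1 r, ((p : ℝ) * d p + l p * ((p : ℝ) * ((p : ℝ) - 1) / 2) * χ)) ≤ 0) :
    (∑ p ∈ Finset.Icc 1 N, d p) ≤ -χ * ∑ p ∈ Finset.Icc 1 N, l p * (((p : ℝ) - 1) / 2) := by
  have hweighted := sum_Icc_mul_nonpos_of_partial_sums_nonpos antitoneOn_natCast_inv
    (fun p => inv_nonneg.2 p.cast_nonneg) h N
  have hterm : ∀ p ∈ Icc 1 N,
      ((p : ℝ))⁻¹ * ((p : ℝ) * d p + l p * ((p : ℝ) * ((p : ℝ) - 1) / 2) * χ)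
        = d p + χ * (l p * (((p : ℝ) - 1) / 2)) := by
    intro p hp
    have hp₀ : (p : ℝ) ≠ 0 := Nat.cast_ne_zero.2 (Nat.one_le_iff_ne_zero.1 (mem_Icc.1 hp).1)
    field_simp
  rw [sum_congr rfl hterm, sum_add_distrib, ← mul_sum] at hweighted
  linarith

/-- the weighted-sum telescoping argument. If `(d_p)`, `(l_p)` vanish for
`p > N`, `χ ≤ 0`, and `Σ_{p=1}^r (p·d_p + l_p·p(p−1)/2·χ) ≤ 0` for every `r ≥ 1`, then
`Σ_p d_p ≤ −χ · Σ_p l_p (p−1)/2`. -/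
theorem stmt_3 (d l : ℕ → ℝ) (N : ℕ) (χ : ℝ) (hχ : χ ≤ 0)
    (hd : ∀ p, N < p → d p = 0) (hl : ∀ p, N < p → l p = 0)
    (h : ∀ r : ℕ, 1 ≤ r →
      (∑ p ∈ Finset.Icc 1 r, ((p : ℝ) * d p + l p * ((p : ℝ) * ((p : ℝ) - 1) / 2) * χ)) ≤ 0) :
    (∑ p ∈ Finset.Icc 1 N, d p) ≤ -χ * ∑ p ∈ Finset.Icc 1 N, l p * (((p : ℝ) - 1) / 2) :=
  stmt_3_general d l N χ h
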